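/- For a smooth conformal immersion Φ : D² → ℝᵐ with orthonormal normal frame (n⃗_α) and tangent frame (e₁,e₂), the identity (∇⊥n⃗_α, e₁)·(∇e₂, n⃗_β) − (∇⊥n⃗_α, e₂)·(∇e₁, n⃗_β) = e^{2λ} Σ_{i,j} h^α_{ij} h^β_{ij} − 4 e^{2λ} H^α H^β holds pointwise, where the dot denotes the scalar product of the ℝ²-valued gradients. -/

import Mathlib

open MeasureTheory Real
open scoped RealInnerProductSpace ENNReal NNReal

noncomputable section

/-- The plane `ℝ²`. -/
abbrev Plane : Type := EuclideanSpace ℝ (Fin 2)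

/-- Euclidean `ℝᵐ`. -/
abbrev Em (m : ℕ) : Type := EuclideanSpace ℝ (Fin m)

/-- The open unit disk `D² ⊆ ℝ²`. -/
def disk : Set Plane := Metric.ball 0 1

/-- Partial derivative in the `i`-th coordinate direction. -/
def pd {V : Type*} [NormedAddCommGroup V] [NormedSpace ℝ V]
    (i : Fin 2) (f : Plane → V) (x : Plane) : V :=
  fderiv ℝ f x (EuclideanSpace.single i (1:ℝ))

/-- Flat Laplacian `Δ = ∂₁² + ∂₂²`. -/
def lap {V : Type*} [NormedAddCommGroup V] [NormedSpace ℝ V]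
    (f : Plane → V) (x : Plane) : V :=
  pd 0 (pd 0 f) x + pd 1 (pd 1 f) x

/-- Divergence of the field with components `F 0, F 1`. -/
def divg {V : Type*} [NormedAddCommGroup V] [NormedSpace ℝ V]
    (F : Fin 2 → Plane → V) (x : Plane) : V :=
  pd 0 (F 0) x + pd 1 (F 1) x

/-- `i`-th component of the rotated gradient `∇⊥ = (−∂₂, ∂₁)`. -/
def perp {V : Type*} [NormedAddCommGroup V] [NormedSpace ℝ V]
    (i : Fin 2) (f : Plane → V) (x : Plane) : V :=
  if i = 0 then -(pd 1 f x) else pd 0 f x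

/-- Scalar test functions compactly supported in the open unit disk. -/
def IsTest (φ : Plane → ℝ) : Prop :=
  ContDiff ℝ (⊤ : ℕ∞) φ ∧ HasCompactSupport φ ∧ tsupport φ ⊆ disk

/-- Vector valued test functions compactly supported in the open unit disk. -/
def IsTestV {m : ℕ} (φ : Plane → Em m) : Prop :=
  ContDiff ℝ (⊤ : ℕ∞) φ ∧ HasCompactSupport φ ∧ tsupport φ ⊆ disk

/-- `G` is the distributional gradient of the extension of `u` by `0` outside the unit
disk; this encodes `u ∈ W^{1,2}₀(D²)` (zero boundary trace). -/
def HasWeakDerivZ {m : ℕ} (u : Plane → Em m) (G : Fin 2 → Plane → Em m) : Prop :=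
  ∀ φ : Plane → ℝ, ContDiff ℝ (⊤ : ℕ∞) φ → HasCompactSupport φ →
    ∀ i : Fin 2, ∫ x in disk, pd i φ x • u x = -∫ x in disk, φ x • G i x

/-- `P` is a measurable field of orthogonal projections of rank `m − 2`: the pointwise
orthogonal projection `π_n` onto the `(m−2)`-plane of a unit `(m−2)`-vector field `n`. -/
def IsNormalProj (m : ℕ) (P : Plane → Em m →L[ℝ] Em m) : Prop :=
  (∀ x u v, ⟪P x u, v⟫ = ⟪u, P x v⟫) ∧ (∀ x, (P x).comp (P x) = P x) ∧
  (∀ x, Module.finrank ℝ (LinearMap.range ((P x) : Em m →ₗ[ℝ] Em m)) = m - 2)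

/-- The weak-`L²` (Lorentz `L^{2,∞}`) quasinorm on the unit disk. -/
def wnorm2 (u : Plane → ℝ) : ℝ≥0∞ :=
  ⨆ t : ℝ≥0, (t : ℝ≥0∞) * (volume {x ∈ disk | (t:ℝ) < |u x|}) ^ (1/2 : ℝ)

/-- The Lorentz `L^{2,1}` norm on the unit disk. -/
def lnorm21 (u : Plane → ℝ) : ℝ≥0∞ :=
  ∫⁻ t in Set.Ioi (0:ℝ), (volume {x ∈ disk | t < |u x|}) ^ (1/2 : ℝ)

/-- Orthonormal tangent frame `e_j = e^{−λ} ∂_jΦ` of a conformal immersion. -/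
def tfr (m : ℕ) (Φ : Plane → Em m) (lam : Plane → ℝ) (j : Fin 2) (x : Plane) : Em m :=
  Real.exp (-(lam x)) • pd j Φ x

/-- Components of the second fundamental form `h^α_{ij} = −e^{−λ}(∂_i n⃗_α, e_j)`. -/
def sffc (m k : ℕ) (Φ : Plane → Em m) (lam : Plane → ℝ) (nv : Fin k → Plane → Em m)
    (a : Fin k) (i j : Fin 2) (x : Plane) : ℝ :=
  -(Real.exp (-(lam x))) * ⟪pd i (nv a) x, tfr m Φ lam j x⟫

/-- Components of the mean curvature vector `H^α = (h^α_{11} + h^α_{22})/2`. -/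
def mcc (m k : ℕ) (Φ : Plane → Em m) (lam : Plane → ℝ) (nv : Fin k → Plane → Em m)
    (a : Fin k) (x : Plane) : ℝ :=
  (sffc m k Φ lam nv a 0 0 x + sffc m k Φ lam nv a 1 1 x) / 2


lemma contDiff_pd {V : Type*} [NormedAddCommGroup V] [NormedSpace ℝ V]
    {f : Plane → V} (hf : ContDiff ℝ (⊤ : ℕ∞) f) (i : Fin 2) : ContDiff ℝ (⊤ : ℕ∞) (pd i f) := by
  unfold pd
  exact (hf.fderiv_right (by simp)).clm_apply contDiff_const

lemma pd_comm {V : Type*} [NormedAddCommGroup V] [NormedSpace ℝ V]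
    {f : Plane → V} (hf : ContDiff ℝ (⊤ : ℕ∞) f) (i j : Fin 2) (x : Plane) :
    pd i (pd j f) x = pd j (pd i f) x := by
  have hd : ∀ y, HasFDerivAt f (fderiv ℝ f y) y :=
    fun y => (hf.differentiable (by simp) y).hasFDerivAt
  have hd2 : DifferentiableAt ℝ (fderiv ℝ f) x :=
    ((hf.fderiv_right (m := 1) (by exact WithTop.coe_le_coe.mpr le_top)).differentiable one_ne_zero) x
  have hsymm := second_derivative_symmetric hd hd2.hasFDerivAt
    (EuclideanSpace.single i (1:ℝ)) (EuclideanSpace.single j (1:ℝ))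
  have key : ∀ a b : Fin 2, pd a (pd b f) x =
      fderiv ℝ (fderiv ℝ f) x (EuclideanSpace.single a (1:ℝ)) (EuclideanSpace.single b (1:ℝ)) := by
    intro a b
    unfold pd
    rw [fderiv_clm_apply hd2 (differentiableAt_const _)]
    simp
  rw [key, key, hsymm]

/-- the pointwise identity
`(∇⊥n⃗_α, e₁)·(∇e₂, n⃗_β) − (∇⊥n⃗_α, e₂)·(∇e₁, n⃗_β)
  = e^{2λ} Σ_{ij} h^α_{ij}h^β_{ij} − 4e^{2λ} H^α H^β`. -/
theorem wedge_divergence_pointwise_identity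
    (m k : ℕ) (Φ : Plane → Em m) (lam : Plane → ℝ) (nv : Fin k → Plane → Em m)
    (hΦ : ContDiff ℝ (⊤ : ℕ∞) Φ) (hlam : ContDiff ℝ (⊤ : ℕ∞) lam) (hnv : ∀ α, ContDiff ℝ (⊤ : ℕ∞) (nv α))
    (hconf0 : ∀ x, ⟪pd 0 Φ x, pd 1 Φ x⟫ = 0)
    (hconf : ∀ x i, ‖pd i Φ x‖ = Real.exp (lam x))
    (horth : ∀ x α β, ⟪nv α x, nv β x⟫ = if α = β then (1:ℝ) else 0)
    (hnormal : ∀ x α i, ⟪nv α x, pd i Φ x⟫ = 0) :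
    ∀ (α β : Fin k) (x : Plane),
      (∑ i : Fin 2,
        (⟪perp i (nv α) x, tfr m Φ lam 0 x⟫ * ⟪pd i (tfr m Φ lam 1) x, nv β x⟫
          - ⟪perp i (nv α) x, tfr m Φ lam 1 x⟫ * ⟪pd i (tfr m Φ lam 0) x, nv β x⟫))
      = Real.exp (2 * lam x) *
          (∑ i : Fin 2, ∑ j : Fin 2, sffc m k Φ lam nv α i j x * sffc m k Φ lam nv β i j x)
        - 4 * Real.exp (2 * lam x) * mcc m k Φ lam nv α x * mcc m k Φ lam nv β x := by
  intro α β x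
  have hΦd : ∀ j : Fin 2, Differentiable ℝ (pd j Φ) :=
    fun j => (contDiff_pd hΦ j).differentiable (by simp)
  have hnvd : ∀ γ, Differentiable ℝ (nv γ) := fun γ => (hnv γ).differentiable (by simp)
  have hcd : Differentiable ℝ (fun y => Real.exp (-(lam y))) :=
    ((hlam.differentiable (by simp)).neg).exp
  have hA : ∀ (γ : Fin k) (i j : Fin 2),
      ⟪nv γ x, pd i (pd j Φ) x⟫ = -⟪pd i (nv γ) x, pd j Φ x⟫ := by
    intro γ i j
    have h0 : (fun y => ⟪nv γ y, pd j Φ y⟫) = fun _ => (0:ℝ) :=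
      funext fun y => hnormal y γ j
    have h1 : fderiv ℝ (fun y => ⟪nv γ y, pd j Φ y⟫) x (EuclideanSpace.single i (1:ℝ)) = 0 := by
      rw [h0]; simp
    rw [fderiv_inner_apply ℝ (hnvd γ x) (hΦd j x)] at h1
    have h2 : ⟪nv γ x, pd i (pd j Φ) x⟫ + ⟪pd i (nv γ) x, pd j Φ x⟫ = 0 := h1
    linarith
  have hpdt : ∀ (i j : Fin 2), pd i (tfr m Φ lam j) x
      = Real.exp (-(lam x)) • pd i (pd j Φ) x
        + (fderiv ℝ (fun y => Real.exp (-(lam y))) x (EuclideanSpace.single i (1:ℝ)))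
            • pd j Φ x := by
    intro i j
    show fderiv ℝ (fun y => Real.exp (-(lam y)) • pd j Φ y) x _ = _
    rw [fderiv_fun_smul (hcd x) (hΦd j x)]
    simp [pd]
  have hT : ∀ (i j : Fin 2), ⟪pd i (tfr m Φ lam j) x, nv β x⟫
      = -(Real.exp (-(lam x)) * ⟪pd i (nv β) x, pd j Φ x⟫) := by
    intro i j
    rw [hpdt i j, inner_add_left, real_inner_smul_left, real_inner_smul_left,
      real_inner_comm (nv β x) (pd j Φ x), hnormal x β j,
      real_inner_comm (nv β x) (pd i (pd j Φ) x), hA β i j]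
    ring
  have hperp0 : ∀ j : Fin 2, ⟪perp 0 (nv α) x, tfr m Φ lam j x⟫
      = -(Real.exp (-(lam x)) * ⟪pd 1 (nv α) x, pd j Φ x⟫) := by
    intro j
    have h : perp 0 (nv α) x = -(pd 1 (nv α) x) := by simp [perp]
    rw [h]
    show ⟪-(pd 1 (nv α) x), Real.exp (-(lam x)) • pd j Φ x⟫ = _
    rw [inner_neg_left, real_inner_smul_right]
  have hperp1 : ∀ j : Fin 2, ⟪perp 1 (nv α) x, tfr m Φ lam j x⟫
      = Real.exp (-(lam x)) * ⟪pd 0 (nv α) x, pd j Φ x⟫ := by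
    intro j
    have h : perp 1 (nv α) x = pd 0 (nv α) x := by simp [perp]
    rw [h]
    show ⟪pd 0 (nv α) x, Real.exp (-(lam x)) • pd j Φ x⟫ = _
    rw [real_inner_smul_right]
  have hS : ∀ (γ : Fin k) (i j : Fin 2), sffc m k Φ lam nv γ i j x
      = -(Real.exp (-(lam x)) * (Real.exp (-(lam x)) * ⟪pd i (nv γ) x, pd j Φ x⟫)) := by
    intro γ i j
    unfold sffc tfr
    rw [real_inner_smul_right]
    ring
  have hsymΦ : pd 0 (pd 1 Φ) x = pd 1 (pd 0 Φ) x := pd_comm hΦ 0 1 x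
  have hsa : ⟪pd 0 (nv α) x, pd 1 Φ x⟫ = ⟪pd 1 (nv α) x, pd 0 Φ x⟫ := by
    have h1 := hA α 0 1; have h2 := hA α 1 0
    rw [hsymΦ] at h1; linarith
  have hsb : ⟪pd 0 (nv β) x, pd 1 Φ x⟫ = ⟪pd 1 (nv β) x, pd 0 Φ x⟫ := by
    have h1 := hA β 0 1; have h2 := hA β 1 0
    rw [hsymΦ] at h1; linarith
  have hexp2 : Real.exp (2 * lam x) = Real.exp (lam x) * Real.exp (lam x) := by
    rw [two_mul, Real.exp_add]
  have hexpneg : Real.exp (-(lam x)) = (Real.exp (lam x))⁻¹ := Real.exp_neg _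
  have hE : Real.exp (lam x) ≠ 0 := Real.exp_ne_zero _
  simp only [Fin.sum_univ_two, mcc, hS, hT, hperp0, hperp1, hexp2, hexpneg, hsa, hsb]
  field_simp
  ring
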